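/- arXiv:1312.6005 — 2 statements merged into one kernel-verified Lean document; each statement's English description precedes it below -/
import Mathlib

section
/- Let K = conv{0, e₁, …, e_n} be the standard simplex in ℝ^n and θ ∈ [0,1]. Then K +_θ (−K) = (1 − θ^{1/n})(K − K), where K +_θ (−K) = {x ∈ K − K : vol(K ∩ (x + K)) ≥ θ·vol(K)}. -/
open MeasureTheory Pointwise ENNReal

/-!
Write `Kₐ = {y ≥ 0 | ∑ yᵢ ≤ a}`, so that `K = K₁` and `Kₐ = a • K`, and let
`‖x‖ = (|∑ xᵢ| + ∑ |xᵢ|) / 2`, the gauge of `K - K`. A point `y` lies in `K ∩ (x + K)` iff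
`y ≥ x⁺` and `∑ yᵢ ≤ 1 + min(∑ xᵢ, 0)`, that is iff `y - x⁺ ∈ K_{1 - ‖x‖}`. Hence
`vol (K ∩ (x + K)) = (1 - ‖x‖)ⁿ vol K`, and the condition `≥ θ vol K` becomes
`‖x‖ ≤ 1 - θ^{1/n}`, which describes `(1 - θ^{1/n}) • (K - K) = K_{1-θ^{1/n}} - K_{1-θ^{1/n}}`.
-/

def cornerSimplex (ι : Type*) [Fintype ι] (a : ℝ) : Set (ι → ℝ) :=
  {y | (∀ i, 0 ≤ y i) ∧ ∑ i, y i ≤ a}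

noncomputable def simplexDiffGauge {ι : Type*} [Fintype ι] (x : ι → ℝ) : ℝ :=
  (|∑ i, x i| + ∑ i, |x i|) / 2

lemma smul_set_sub_eq {α β : Type*} [AddGroup β] [DistribSMul α β] (a : α) (s t : Set β) :
    a • (s - t) = a • s - a • t := by
  simp only [sub_eq_add_neg, smul_add, Set.smul_set_neg]

section

variable {ι : Type*} [Fintype ι]

lemma sum_max_zero_eq (x : ι → ℝ) : ∑ i, max (x i) 0 = (∑ i, x i + ∑ i, |x i|) / 2 := by
  have h : ∀ a : ℝ, max a 0 = (a + |a|) / 2 := fun a => by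
    rcases le_total 0 a with h | h
    · rw [max_eq_left h, abs_of_nonneg h]; ring
    · rw [max_eq_right h, abs_of_nonpos h]; ring
  simp only [h, ← Finset.sum_div, Finset.sum_add_distrib]

theorem convexHull_zero_single_eq_cornerSimplex [DecidableEq ι] :
    convexHull ℝ (insert 0 (Set.range fun i : ι => Pi.single i (1 : ℝ))) = cornerSimplex ι 1 := by
  apply le_antisymm
  · refine convexHull_min ?_ ?_
    · rintro y (rfl | ⟨i, rfl⟩)
      · exact ⟨fun _ => le_rfl, by simp⟩
      · exact ⟨fun j => by by_cases h : j = i <;> simp [h], by simp⟩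
    · rintro x ⟨hx0, hx1⟩ y ⟨hy0, hy1⟩ a b ha hb hab
      refine ⟨fun i => add_nonneg (mul_nonneg ha (hx0 i)) (mul_nonneg hb (hy0 i)), ?_⟩
      simp only [Pi.add_apply, Pi.smul_apply, smul_eq_mul, Finset.sum_add_distrib,
        ← Finset.mul_sum]
      nlinarith
  · rintro x ⟨hx0, hx1⟩
    have hmem := (convex_convexHull ℝ
        (insert 0 (Set.range fun i : ι => Pi.single i (1 : ℝ)))).sum_mem (t := Finset.univ)
      (w := fun o : Option ι => o.elim (1 - ∑ i, x i) x)
      (z := fun o => o.elim 0 fun i => Pi.single i 1)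
      (fun o _ => by cases o <;> simp [hx0, hx1])
      (by simp [Fintype.sum_option])
      (fun o _ => subset_convexHull ℝ _ <| by cases o <;> simp)
    convert hmem using 1
    ext j
    simp [Fintype.sum_option, Pi.single_apply]

lemma smul_cornerSimplex_one {c : ℝ} (hc : 0 ≤ c) : c • cornerSimplex ι 1 = cornerSimplex ι c := by
  rcases hc.eq_or_lt with rfl | hc
  · rw [Set.zero_smul_set (⟨0, fun _ => le_rfl, by simp⟩ : (cornerSimplex ι 1).Nonempty)]
    ext y
    simp only [Set.mem_zero, cornerSimplex, Set.mem_ofPred_eq]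
    refine ⟨by rintro rfl; simp, fun ⟨hy0, hy1⟩ => funext fun i => ?_⟩
    exact (Finset.sum_eq_zero_iff_of_nonneg fun i _ => hy0 i).1
      (hy1.antisymm (Finset.sum_nonneg fun i _ => hy0 i)) i (Finset.mem_univ i)
  · ext y
    simp only [Set.mem_smul_set_iff_inv_smul_mem₀ hc.ne', cornerSimplex, Set.mem_ofPred_eq,
      Pi.smul_apply, smul_eq_mul, ← Finset.mul_sum, inv_mul_le_iff₀ hc, mul_one,
      mul_nonneg_iff_of_pos_left (inv_pos.2 hc)]

lemma cornerSimplex_inter_vadd (a : ℝ) (x : ι → ℝ) :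
    cornerSimplex ι a ∩ (x +ᵥ cornerSimplex ι a) =
      (fun i => max (x i) 0) +ᵥ cornerSimplex ι (a - simplexDiffGauge x) := by
  ext y
  simp only [cornerSimplex, simplexDiffGauge, Set.mem_inter_iff, Set.mem_ofPred_eq,
    Set.mem_vadd_set_iff_neg_vadd_mem, vadd_eq_add, neg_add_eq_sub, Pi.sub_apply,
    Finset.sum_sub_distrib, sum_max_zero_eq, sub_nonneg, max_le_iff]
  have := le_abs_self (∑ i, x i)
  have := neg_abs_le (∑ i, x i)
  constructor
  · rintro ⟨⟨hy0, hy1⟩, hyx, hyx1⟩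
    refine ⟨fun i => ⟨hyx i, hy0 i⟩, ?_⟩
    rcases abs_cases (∑ i, x i) with ⟨h, _⟩ | ⟨h, _⟩ <;> linarith
  · rintro ⟨hy, hy1⟩
    exact ⟨⟨fun i => (hy i).2, by linarith⟩, fun i => (hy i).1, by linarith⟩

lemma cornerSimplex_sub_cornerSimplex (a : ℝ) :
    cornerSimplex ι a - cornerSimplex ι a = {x | simplexDiffGauge x ≤ a} := by
  ext x
  simp only [Set.mem_sub, cornerSimplex, simplexDiffGauge, Set.mem_ofPred_eq]
  constructor
  · rintro ⟨u, ⟨hu0, hu1⟩, v, ⟨hv0, hv1⟩, rfl⟩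
    have habs : ∑ i, |(u - v) i| ≤ ∑ i, u i + ∑ i, v i := by
      rw [← Finset.sum_add_distrib]
      gcongr with i
      simpa [abs_of_nonneg (hu0 i), abs_of_nonneg (hv0 i)] using abs_sub (u i) (v i)
    simp only [Pi.sub_apply, Finset.sum_sub_distrib] at habs ⊢
    rcases abs_cases (∑ i, u i - ∑ i, v i) with ⟨h, _⟩ | ⟨h, _⟩ <;> linarith
  · intro hx
    have hpos := sum_max_zero_eq x
    have hneg := sum_max_zero_eq (-x)
    simp only [Pi.neg_apply, abs_neg, Finset.sum_neg_distrib] at hneg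
    have := le_abs_self (∑ i, x i)
    have := neg_abs_le (∑ i, x i)
    refine ⟨fun i => max (x i) 0, ⟨fun i => le_max_right _ _, by linarith⟩,
      fun i => max (-x i) 0, ⟨fun i => le_max_right _ _, by linarith⟩, ?_⟩
    exact funext fun i => max_zero_sub_max_neg_zero_eq_self (x i)

lemma volume_cornerSimplex {a : ℝ} (ha : 0 ≤ a) :
    volume (cornerSimplex ι a) =
      ENNReal.ofReal (a ^ Fintype.card ι) * volume (cornerSimplex ι 1) := by
  rw [← smul_cornerSimplex_one ha, Measure.addHaar_smul_of_nonneg volume ha,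
    Module.finrank_fintype_fun_eq_card]

lemma volume_cornerSimplex_one_ne_zero : volume (cornerSimplex ι 1) ≠ 0 := by
  set ε : ℝ := 1 / (Fintype.card ι + 1)
  have hε : 0 < ε := by positivity
  have hbox : Set.univ.pi (fun _ : ι => Set.Icc 0 ε) ⊆ cornerSimplex ι 1 := fun y hy => by
    refine ⟨fun i => (hy i trivial).1, ?_⟩
    calc ∑ i, y i ≤ ∑ _i : ι, ε := Finset.sum_le_sum fun i _ => (hy i trivial).2
      _ ≤ 1 := by
        simp only [Finset.sum_const, Finset.card_univ, nsmul_eq_mul, ε]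
        rw [mul_one_div, div_le_one (by positivity)]
        linarith
  refine (measure_pos_of_superset hbox ?_).ne'
  rw [volume_pi_pi]
  simp [hε]

lemma volume_cornerSimplex_one_ne_top : volume (cornerSimplex ι 1) ≠ ∞ := by
  refine measure_ne_top_of_subset (s := Set.univ.pi fun _ : ι => Set.Icc 0 1) ?_
    (by rw [volume_pi_pi]; simp)
  exact fun y ⟨hy0, hy1⟩ i _ =>
    ⟨hy0 i, (Finset.single_le_sum (fun j _ => hy0 j) (Finset.mem_univ i)).trans hy1⟩

lemma volume_cornerSimplex_inter_vadd {x : ι → ℝ} (hx : simplexDiffGauge x ≤ 1) :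
    volume (cornerSimplex ι 1 ∩ (x +ᵥ cornerSimplex ι 1)) =
      ENNReal.ofReal ((1 - simplexDiffGauge x) ^ Fintype.card ι) * volume (cornerSimplex ι 1) := by
  rw [cornerSimplex_inter_vadd, measure_vadd, volume_cornerSimplex (sub_nonneg.2 hx)]

lemma ofReal_mul_volume_le_volume_inter_vadd_iff [Nonempty ι] {θ : ℝ} (hθ : 0 ≤ θ)
    {x : ι → ℝ} (hx : simplexDiffGauge x ≤ 1) :
    ENNReal.ofReal θ * volume (cornerSimplex ι 1) ≤
        volume (cornerSimplex ι 1 ∩ (x +ᵥ cornerSimplex ι 1)) ↔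
      simplexDiffGauge x ≤ 1 - θ ^ (Fintype.card ι : ℝ)⁻¹ := by
  have h1x : 0 ≤ 1 - simplexDiffGauge x := sub_nonneg.2 hx
  rw [volume_cornerSimplex_inter_vadd hx,
    ENNReal.mul_le_mul_iff_left volume_cornerSimplex_one_ne_zero volume_cornerSimplex_one_ne_top,
    ENNReal.ofReal_le_ofReal_iff (by positivity), ← Real.rpow_natCast,
    ← Real.rpow_inv_le_iff_of_pos hθ h1x (by exact_mod_cast Fintype.card_pos), le_sub_comm]

end

theorem convolution_body_of_simplex {n : ℕ} (hn : 0 < n)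
    (K : Set (Fin n → ℝ))
    (hK : K = convexHull ℝ (insert 0 (Set.range fun i : Fin n => Pi.single i (1:ℝ))))
    (θ : ℝ) (hθ : θ ∈ Set.Icc (0:ℝ) 1) :
    {x ∈ K - K | ENNReal.ofReal θ * volume K ≤ volume (K ∩ (x +ᵥ K))} =
      (1 - θ ^ ((n:ℝ)⁻¹)) • (K - K) := by
  have : Nonempty (Fin n) := Fin.pos_iff_nonempty.1 hn
  obtain ⟨hθ0, hθ1⟩ := hθ
  have hroot : 0 ≤ θ ^ (n : ℝ)⁻¹ := Real.rpow_nonneg hθ0 _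
  have hc : 0 ≤ 1 - θ ^ (n : ℝ)⁻¹ := sub_nonneg.2 (Real.rpow_le_one hθ0 hθ1 (by positivity))
  rw [hK, convexHull_zero_single_eq_cornerSimplex, smul_set_sub_eq, smul_cornerSimplex_one hc,
    cornerSimplex_sub_cornerSimplex, cornerSimplex_sub_cornerSimplex]
  ext x
  have hiff := ofReal_mul_volume_le_volume_inter_vadd_iff (ι := Fin n) hθ0 (x := x)
  rw [Fintype.card_fin] at hiff
  simp only [Set.mem_ofPred_eq]
  exact ⟨fun ⟨hx, hvol⟩ => (hiff hx).1 hvol,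
    fun hx => have hx1 := hx.trans (by linarith); ⟨hx1, (hiff hx1).2 hx⟩⟩
end

section
/- Let K be a convex body in ℝ^n and E a k-dimensional linear subspace. Then vol_k((K − K) ∩ E) ≤ binom(n + k, k) · max_{x ∈ ℝ^n} vol_k(K ∩ (x + E)). -/
/-!
Rogers–Shephard. If `v ∈ t • (K - K)` with `0 ≤ t ≤ 1`, say `v = t (p - q)` with `p, q ∈ K`, then
the homothetic copy `t p + (1 - t) K` lies in `K ∩ (v + K)`, so the covariogram
`g(v) = vol (K ∩ (v + K))` is at least `(1 - t) ^ n vol K`. Weighting the sets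
`t • ((K - K) ∩ E)` by `n (1 - t) ^ (n - 1) dt` and integrating over `E` gives
`∫_E g ≥ vol K · vol_k ((K - K) ∩ E) · ∫₀¹ n (1 - t) ^ (n - 1) t ^ k dt`, where the Beta integral
equals `1 / (n + k).choose k`. On the other hand Fubini gives
`∫_E g = ∫_K vol_k (K ∩ (x + E)) dx ≤ vol K · max_x vol_k (K ∩ (x + E))`.
-/

open MeasureTheory Pointwise ENNReal
open Set
open scoped Nat

theorem integral_pow_mul_one_sub_pow (a b : ℕ) :
    ∫ x in (0 : ℝ)..1, x ^ a * (1 - x) ^ b = (a ! * b ! : ℝ) / (a + b + 1)! := by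
  induction b generalizing a with
  | zero => simp [Nat.factorial_succ]; field_simp
  | succ b ih =>
    have hderiv (x : ℝ) : HasDerivAt (fun x : ℝ => x ^ (a + 1) * (1 - x) ^ (b + 1))
        ((a + 1) * (x ^ a * (1 - x) ^ (b + 1)) - (b + 1) * (x ^ (a + 1) * (1 - x) ^ b)) x := by
      refine ((hasDerivAt_pow (a + 1) x).fun_mul
        (((hasDerivAt_id x).const_sub 1).fun_pow (b + 1))).congr_deriv ?_
      simp only [id, add_tsub_cancel_right]
      push_cast
      ring
    have hparts := intervalIntegral.integral_eq_sub_of_hasDerivAt (fun x _ => hderiv x)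
      (Continuous.intervalIntegrable (by fun_prop) 0 1)
    rw [intervalIntegral.integral_sub (Continuous.intervalIntegrable (by fun_prop) 0 1)
      (Continuous.intervalIntegrable (by fun_prop) 0 1), intervalIntegral.integral_const_mul,
      intervalIntegral.integral_const_mul, ih, sub_eq_iff_eq_add] at hparts
    simp only [one_pow, sub_self, ne_eq, Nat.add_eq_zero_iff, one_ne_zero, and_false,
      not_false_eq_true, zero_pow, mul_zero, sub_zero, mul_one, zero_add] at hparts
    have ha : (a + 1 : ℝ) ≠ 0 := by positivity
    rw [← mul_right_inj' ha, hparts, show a + 1 + b + 1 = a + (b + 1) + 1 by ring,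
      Nat.factorial_succ a, Nat.factorial_succ b]
    push_cast
    ring

theorem lintegral_Ioo_mul_one_sub_pow_mul_pow_eq_inv_choose {n : ℕ} (hn : 0 < n) (k : ℕ) :
    ∫⁻ t in Ioo 0 1, ENNReal.ofReal (n * (1 - t) ^ (n - 1)) * ENNReal.ofReal (t ^ k) =
      ((n + k).choose k : ℝ≥0∞)⁻¹ := by
  have hnonneg : ∀ t ∈ Ioo (0 : ℝ) 1, 0 ≤ n * (1 - t) ^ (n - 1) := fun t ht =>
    mul_nonneg (Nat.cast_nonneg n) (pow_nonneg (sub_nonneg.2 ht.2.le) _)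
  have hbeta : ∫ t in (0 : ℝ)..1, n * (1 - t) ^ (n - 1) * t ^ k = ((n + k).choose k : ℝ)⁻¹ := by
    simp_rw [mul_assoc, mul_comm ((1 - _ : ℝ) ^ (n - 1))]
    rw [intervalIntegral.integral_const_mul, integral_pow_mul_one_sub_pow,
      show k + (n - 1) + 1 = n + k by omega, ← Nat.add_choose_mul_factorial_mul_factorial,
      ← Nat.mul_factorial_pred hn.ne']
    push_cast
    field_simp
  calc ∫⁻ t in Ioo 0 1, ENNReal.ofReal (n * (1 - t) ^ (n - 1)) * ENNReal.ofReal (t ^ k)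
      = ∫⁻ t in Ioo 0 1, ENNReal.ofReal (n * (1 - t) ^ (n - 1) * t ^ k) :=
        setLIntegral_congr_fun measurableSet_Ioo fun t ht => (ofReal_mul (hnonneg t ht)).symm
    _ = ENNReal.ofReal (∫ t in Ioo 0 1, n * (1 - t) ^ (n - 1) * t ^ k) :=
        (ofReal_integral_eq_lintegral_ofReal
          ((Continuous.integrableOn_Icc (by fun_prop)).mono_set Ioo_subset_Icc_self)
          (ae_restrict_of_forall_mem measurableSet_Ioo
            fun t ht => mul_nonneg (hnonneg t ht) (pow_nonneg ht.1.le k))).symm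
    _ = ((n + k).choose k : ℝ≥0∞)⁻¹ := by
        rw [← integral_Ioc_eq_integral_Ioo, ← intervalIntegral.integral_of_le zero_le_one, hbeta,
          ofReal_inv_of_pos (Nat.cast_pos.2 (Nat.choose_pos (Nat.le_add_left k n))),
          ofReal_natCast]

theorem lintegral_Ioo_indicator_le_iSup (n : ℕ) (S : Set ℝ) :
    ∫⁻ t in Ioo 0 1, S.indicator (fun t => ENNReal.ofReal (n * (1 - t) ^ (n - 1))) t ≤
      ⨆ t ∈ S ∩ Ioo 0 1, ENNReal.ofReal ((1 - t) ^ n) := by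
  set f : ℝ → ℝ≥0∞ := fun t => ENNReal.ofReal (n * (1 - t) ^ (n - 1))
  rcases (S ∩ Ioo 0 1).eq_empty_or_nonempty with hS | hS
  · refine le_of_eq_of_le (setLIntegral_eq_zero measurableSet_Ioo fun t ht => ?_) zero_le
    exact indicator_of_notMem (fun htS => hS.subset ⟨htS, ht⟩) f
  have hbdd : BddBelow (S ∩ Ioo 0 1) := ⟨0, fun t ht => ht.2.1.le⟩
  set t₀ := sInf (S ∩ Ioo 0 1)
  have ht₀ : t₀ ≤ 1 := (csInf_le hbdd hS.some_mem).trans hS.some_mem.2.2.le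
  have hderiv (t : ℝ) : HasDerivAt (fun t : ℝ => -(1 - t) ^ n) (n * (1 - t) ^ (n - 1)) t := by
    refine (((hasDerivAt_id t).const_sub 1).fun_pow n).neg.congr_deriv ?_
    simp
  have hclosed : IsClosed {t : ℝ | ENNReal.ofReal ((1 - t) ^ n) ≤
      ⨆ t ∈ S ∩ Ioo 0 1, ENNReal.ofReal ((1 - t) ^ n)} :=
    isClosed_le (ENNReal.continuous_ofReal.comp (by fun_prop)) continuous_const
  calc ∫⁻ t in Ioo 0 1, S.indicator f t
      ≤ ∫⁻ t in Ioo 0 1, (Icc t₀ 1).indicator f t := by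
        refine setLIntegral_mono' measurableSet_Ioo fun t ht => ?_
        by_cases htS : t ∈ S
        · rw [indicator_of_mem htS,
            indicator_of_mem (show t ∈ Icc t₀ 1 from ⟨csInf_le hbdd ⟨htS, ht⟩, ht.2.le⟩)]
        · exact (indicator_of_notMem htS f).trans_le zero_le
    _ ≤ ∫⁻ t in Icc t₀ 1, f t :=
        (setLIntegral_le_lintegral _ _).trans_eq (lintegral_indicator measurableSet_Icc _)
    _ = ENNReal.ofReal ((1 - t₀) ^ n - 0 ^ n) := by
        rw [← ofReal_integral_eq_lintegral_ofReal (Continuous.integrableOn_Icc (by fun_prop))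
          (ae_restrict_of_forall_mem measurableSet_Icc fun t ht =>
            mul_nonneg (Nat.cast_nonneg n) (pow_nonneg (sub_nonneg.2 ht.2) _)),
          integral_Icc_eq_integral_Ioc, ← intervalIntegral.integral_of_le ht₀,
          intervalIntegral.integral_eq_sub_of_hasDerivAt (fun t _ => hderiv t)
            (Continuous.intervalIntegrable (by fun_prop) _ _)]
        simp [neg_add_eq_sub]
    _ ≤ ENNReal.ofReal ((1 - t₀) ^ n) :=
        ENNReal.ofReal_le_ofReal (sub_le_self _ (pow_nonneg le_rfl n))
    _ ≤ ⨆ t ∈ S ∩ Ioo 0 1, ENNReal.ofReal ((1 - t) ^ n) :=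
        hclosed.closure_subset_iff.2
          (fun t ht => le_biSup (fun t => ENNReal.ofReal ((1 - t) ^ n)) ht)
          (csInf_mem_closure hS hbdd)

theorem lintegral_lintegral_Ioo_indicator_inv_smul_mem {F : Type*} [NormedAddCommGroup F]
    [NormedSpace ℝ F] [FiniteDimensional ℝ F] [MeasurableSpace F] [BorelSpace F]
    (ν : Measure F) [ν.IsAddHaarMeasure] {C : Set F} (hC : MeasurableSet C) {f : ℝ → ℝ≥0∞}
    (hf : Measurable f) :
    ∫⁻ v, (∫⁻ t in Ioo 0 1, {t | t⁻¹ • v ∈ C}.indicator f t) ∂ν =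
      (∫⁻ t in Ioo 0 1, f t * ENNReal.ofReal (t ^ Module.finrank ℝ F)) * ν C := by
  have hmeas : Measurable fun p : F × ℝ => {t | t⁻¹ • p.1 ∈ C}.indicator f p.2 :=
    (hf.comp measurable_snd).indicator (hC.preimage (measurable_snd.inv.smul measurable_fst))
  rw [lintegral_lintegral_swap hmeas.aemeasurable, ← lintegral_mul_const _ (by fun_prop)]
  refine setLIntegral_congr_fun measurableSet_Ioo fun t ht => ?_
  have hslice : (fun v => {t | t⁻¹ • v ∈ C}.indicator f t) = (t • C).indicator fun _ => f t := by
    ext v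
    simp only [indicator, mem_ofPred_eq]
    classical exact if_congr (mem_smul_set_iff_inv_smul_mem₀ ht.1.ne' C v).symm rfl rfl
  rw [hslice, lintegral_indicator_const (hC.const_smul₀ t),
    Measure.addHaar_smul_of_nonneg ν ht.1.le, mul_assoc]

def covariogram {V : Type*} [Add V] [MeasurableSpace V] (μ : Measure V) (K : Set V)
    (v : V) : ℝ≥0∞ :=
  μ (K ∩ (v +ᵥ K))

theorem mem_inter_vadd_self_iff {V : Type*} [AddCommGroup V] {K : Set V} {v x : V} :
    x ∈ K ∩ (v +ᵥ K) ↔ x ∈ K ∧ x - v ∈ K := by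
  rw [mem_inter_iff, mem_vadd_set_iff_neg_vadd_mem, vadd_eq_add, neg_add_eq_sub]

theorem lintegral_covariogram_le {V : Type*} [NormedAddCommGroup V] [NormedSpace ℝ V]
    [MeasurableSpace V] [BorelSpace V] [SecondCountableTopology V]
    (μ : Measure V) [SFinite μ] {E : Submodule ℝ V} (ν : Measure E) [SFinite ν]
    [ν.IsNegInvariant] {K : Set V} (hK : MeasurableSet K) :
    ∫⁻ v : E, covariogram μ K v ∂ν ≤ (⨆ x : V, ν ((fun e : E => x + (e : V)) ⁻¹' K)) * μ K := by
  set D : Set (E × V) := {p | p.2 ∈ K ∧ p.2 - p.1 ∈ K}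
  have hD : MeasurableSet D :=
    (hK.preimage measurable_snd).inter
      (hK.preimage (measurable_snd.sub (measurable_subtype_coe.comp measurable_fst)))
  have hfiber (x : V) : ν ((fun v => (v, x)) ⁻¹' D) ≤
      K.indicator (fun _ => ⨆ x : V, ν ((fun e : E => x + (e : V)) ⁻¹' K)) x := by
    by_cases hx : x ∈ K
    · rw [indicator_of_mem hx]
      have : (fun v => (v, x)) ⁻¹' D = -((fun e : E => x + (e : V)) ⁻¹' K) := by
        ext v
        simp [D, hx, sub_eq_add_neg]
      rw [this, Measure.measure_neg]
      exact le_iSup (fun x : V => ν ((fun e : E => x + (e : V)) ⁻¹' K)) x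
    · simp [D, hx]
  calc ∫⁻ v : E, covariogram μ K v ∂ν = ν.prod μ D := by
        rw [Measure.prod_apply hD]
        refine lintegral_congr fun v => congr_arg μ ?_
        ext x
        exact mem_inter_vadd_self_iff
    _ = ∫⁻ x, ν ((fun v => (v, x)) ⁻¹' D) ∂μ := Measure.prod_apply_symm hD
    _ ≤ _ := (lintegral_mono hfiber).trans_eq (lintegral_indicator_const hK _)

section

variable {V : Type*} [NormedAddCommGroup V] [NormedSpace ℝ V] [FiniteDimensional ℝ V]
  [MeasurableSpace V] [BorelSpace V] (μ : Measure V) [μ.IsAddHaarMeasure] {K : Set V}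

theorem ofReal_one_sub_pow_mul_le_covariogram (hK : Convex ℝ K) {v : V} (hv : v ∈ K - K)
    {t : ℝ} (ht₀ : 0 ≤ t) (ht₁ : t ≤ 1) :
    ENNReal.ofReal ((1 - t) ^ Module.finrank ℝ V) * μ K ≤ covariogram μ K (t • v) := by
  obtain ⟨p, hp, q, hq, rfl⟩ := hv
  have hsub : t • p +ᵥ (1 - t) • K ⊆ K ∩ (t • (p - q) +ᵥ K) := by
    rintro _ ⟨_, ⟨y, hy, rfl⟩, rfl⟩
    rw [mem_inter_vadd_self_iff]
    refine ⟨hK hp hy ht₀ (by linarith) (by simp), ?_⟩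
    convert hK hq hy ht₀ (sub_nonneg.2 ht₁) (by ring) using 1
    simp only [vadd_eq_add, smul_sub]
    abel
  calc ENNReal.ofReal ((1 - t) ^ Module.finrank ℝ V) * μ K
      = μ (t • p +ᵥ (1 - t) • K) := by
        rw [measure_vadd, Measure.addHaar_smul_of_nonneg μ (sub_nonneg.2 ht₁)]
    _ ≤ covariogram μ K (t • (p - q)) := measure_mono hsub

theorem measure_mul_lintegral_Ioo_indicator_le_covariogram (hK : Convex ℝ K) (v : V) :
    μ K * ∫⁻ t in Ioo 0 1, {t | t⁻¹ • v ∈ K - K}.indicator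
        (fun t => ENNReal.ofReal (Module.finrank ℝ V * (1 - t) ^ (Module.finrank ℝ V - 1))) t ≤
      covariogram μ K v := by
  refine (mul_le_mul_right (lintegral_Ioo_indicator_le_iSup _ _) _).trans ?_
  simp only [ENNReal.mul_iSup]
  refine iSup₂_le fun t ht => ?_
  have := ofReal_one_sub_pow_mul_le_covariogram μ hK ht.1 ht.2.1.le ht.2.2.le
  rwa [smul_inv_smul₀ ht.2.1.ne', mul_comm] at this

end

theorem sections_of_difference_body_bound {n k : ℕ}
    (K : Set (EuclideanSpace ℝ (Fin n)))
    (hK : Convex ℝ K) (hKc : IsCompact K) (hKi : (interior K).Nonempty)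
    (E : Submodule ℝ (EuclideanSpace ℝ (Fin n))) (hE : Module.finrank ℝ E = k) :
    volume (((↑) : E → EuclideanSpace ℝ (Fin n)) ⁻¹' (K - K)) ≤
      ((n + k).choose k : ℝ≥0∞) *
        ⨆ x : EuclideanSpace ℝ (Fin n),
          volume ((fun e : E => x + (e : EuclideanSpace ℝ (Fin n))) ⁻¹' K) := by
  obtain ⟨x₀, hx₀⟩ := hKi
  have hchoose : 0 < (n + k).choose k := Nat.choose_pos (Nat.le_add_left k n)
  set C : Set E := ((↑) : E → EuclideanSpace ℝ (Fin n)) ⁻¹' (K - K)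
  set M := ⨆ x : EuclideanSpace ℝ (Fin n),
    volume ((fun e : E => x + (e : EuclideanSpace ℝ (Fin n))) ⁻¹' K)
  -- for `n = 0` the weight `n (1 - t) ^ (n - 1)` vanishes; but then every section is a point
  rcases Nat.eq_zero_or_pos n with rfl | hn
  · calc volume C ≤ volume ((fun e : E => x₀ + (e : EuclideanSpace ℝ (Fin 0))) ⁻¹' K) :=
          measure_mono fun e _ => by
            simpa [Subsingleton.elim (x₀ + (e : EuclideanSpace ℝ (Fin 0))) x₀]
              using interior_subset hx₀
      _ ≤ M := le_iSup (fun x => volume ((fun e : E => x + (e : EuclideanSpace ℝ (Fin 0))) ⁻¹' K)) x₀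
      _ ≤ _ := le_mul_of_one_le_left' (by exact_mod_cast hchoose)
  have hK0 : volume K ≠ 0 := (Measure.measure_pos_of_nonempty_interior _ ⟨x₀, hx₀⟩).ne'
  have hKtop : volume K ≠ ∞ := hKc.measure_lt_top.ne
  have hC : MeasurableSet C := by
    have hKK : IsCompact (K - K) := by rw [sub_eq_add_neg]; exact hKc.add hKc.neg
    exact (hKK.isClosed.preimage continuous_subtype_val).measurableSet
  have key : volume K * (((n + k).choose k : ℝ≥0∞)⁻¹ * volume C) ≤ volume K * M := calc
    volume K * (((n + k).choose k : ℝ≥0∞)⁻¹ * volume C)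
        = ∫⁻ v : E, volume K * ∫⁻ t in Ioo 0 1,
            {t | t⁻¹ • v ∈ C}.indicator (fun t => ENNReal.ofReal (n * (1 - t) ^ (n - 1))) t := by
          rw [lintegral_const_mul' _ _ hKtop,
            lintegral_lintegral_Ioo_indicator_inv_smul_mem volume hC (by fun_prop), hE,
            lintegral_Ioo_mul_one_sub_pow_mul_pow_eq_inv_choose hn]
      _ ≤ ∫⁻ v : E, covariogram volume K v := lintegral_mono fun v => by
          have h := measure_mul_lintegral_Ioo_indicator_le_covariogram volume hK
            (v : EuclideanSpace ℝ (Fin n))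
          rwa [finrank_euclideanSpace_fin] at h
      _ ≤ M * volume K := lintegral_covariogram_le (E := E) volume volume hKc.measurableSet
      _ = volume K * M := mul_comm _ _
  rwa [ENNReal.mul_le_mul_iff_right hK0 hKtop,
    ENNReal.inv_mul_le_iff (by exact_mod_cast hchoose.ne') (natCast_ne_top _)] at key
end
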